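/- The weak Kreisel–Putnam axiom (¬p → (¬q ∨ ¬r)) → ((¬p → ¬q) ∨ (¬p → ¬r)) is valid in every Medvedev frame M_n. -/

import Mathlib

/-
Let `v` lie below two worlds `v₁, v₂` of `M n`, i.e. `v ⊇ v₁ ∪ v₂`. Every world sees a singleton,
and a world sees `{i}` iff it contains `i`; hence `¬φ` holds at a world iff `φ` fails at every
singleton inside it. So `¬φ` holds at `v₁ ∪ v₂` (above `v`, below both `vⱼ`) as soon as it holds at
`v₁` and at `v₂`. If `¬p → ¬q` fails at `v` via `v₁` and `¬p → ¬r` via `v₂`, then `¬p`, hence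
`¬q ∨ ¬r`, holds at `v₁ ∪ v₂`, and persistence contradicts the choice of `v₁` or `v₂`.
-/

inductive Fml : Type where
  | atom : ℕ → Fml
  | bot  : Fml
  | and  : Fml → Fml → Fml
  | or   : Fml → Fml → Fml
  | imp  : Fml → Fml → Fml
deriving DecidableEq

/-- Intuitionistic negation: ¬φ := φ → ⊥. -/
def Fml.neg (φ : Fml) : Fml := .imp φ .bot

/-- Biconditional. -/
def Fml.iff (φ ψ : Fml) : Fml := .and (.imp φ ψ) (.imp ψ φ)

/-- Disjunction of a list of formulas (empty disjunction is ⊥). -/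
def disj : List Fml → Fml
  | [] => .bot
  | [φ] => φ
  | φ :: l => .or φ (disj l)

/-- Conjunction of a list of formulas (empty conjunction is ¬⊥). -/
def conj : List Fml → Fml
  | [] => Fml.neg .bot
  | [φ] => φ
  | φ :: l => .and φ (conj l)

/-- Substitution, extended homomorphically. -/
def Fml.subst (σ : ℕ → Fml) : Fml → Fml
  | .atom p => σ p
  | .bot => .bot
  | .and φ ψ => .and (φ.subst σ) (ψ.subst σ)
  | .or φ ψ => .or (φ.subst σ) (ψ.subst σ)
  | .imp φ ψ => .imp (φ.subst σ) (ψ.subst σ)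

/-- Hilbert-style provability for intuitionistic logic plus extra axioms `Ax`. -/
inductive Prov (Ax : Fml → Prop) : Fml → Prop where
  | ax {φ} : Ax φ → Prov Ax φ
  | k {φ ψ} : Prov Ax (.imp φ (.imp ψ φ))
  | s {φ ψ χ} : Prov Ax (.imp (.imp φ (.imp ψ χ)) (.imp (.imp φ ψ) (.imp φ χ)))
  | andI {φ ψ} : Prov Ax (.imp φ (.imp ψ (.and φ ψ)))
  | andE₁ {φ ψ} : Prov Ax (.imp (.and φ ψ) φ)
  | andE₂ {φ ψ} : Prov Ax (.imp (.and φ ψ) ψ)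
  | orI₁ {φ ψ} : Prov Ax (.imp φ (.or φ ψ))
  | orI₂ {φ ψ} : Prov Ax (.imp ψ (.or φ ψ))
  | orE {φ ψ χ} : Prov Ax (.imp (.imp φ χ) (.imp (.imp ψ χ) (.imp (.or φ ψ) χ)))
  | exfalso {φ} : Prov Ax (.imp .bot φ)
  | mp {φ ψ} : Prov Ax (.imp φ ψ) → Prov Ax φ → Prov Ax ψ

/-- No extra axioms: pure intuitionistic logic is `Prov NoAx`. -/
def NoAx : Fml → Prop := fun _ => False

/-- Instances of the weak Kreisel–Putnam axiom schema. -/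
def wKPAx : Fml → Prop := fun φ =>
  ∃ a b c : Fml, φ = .imp (.imp a.neg (.or b.neg c.neg))
    (.or (.imp a.neg b.neg) (.imp a.neg c.neg))

/-- Intuitionistic Kripke forcing over a preordered set of worlds. -/
def Force {W : Type} [Preorder W] (V : W → ℕ → Prop) : W → Fml → Prop
  | w, .atom p => V w p
  | _, .bot => False
  | w, .and φ ψ => Force V w φ ∧ Force V w ψ
  | w, .or φ ψ => Force V w φ ∨ Force V w ψ
  | w, .imp φ ψ => ∀ v, w ≤ v → Force V v φ → Force V v ψ

/-- A valuation is monotone (persistent). -/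
def MonoVal {W : Type} [Preorder W] (V : W → ℕ → Prop) : Prop :=
  ∀ ⦃w w'⦄, w ≤ w' → ∀ p, V w p → V w' p

/-- The Medvedev frame `M n`: nonempty subsets of `Fin n` ordered by reverse inclusion. -/
def Med (n : ℕ) : Type := {I : Finset (Fin n) // I.Nonempty}

instance {n : ℕ} : PartialOrder (Med n) where
  le I J := J.1 ⊆ I.1
  le_refl I := Finset.Subset.refl _
  le_trans I J K h h' := Finset.Subset.trans h' h
  le_antisymm I J h h' := Subtype.ext (Finset.Subset.antisymm h' h)

instance {n : ℕ} : DecidableEq (Med n) := Subtype.instDecidableEq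

/-- Validity on the Medvedev frame `M n`. -/
def MedValid (n : ℕ) (φ : Fml) : Prop :=
  ∀ V : Med n → ℕ → Prop, MonoVal V → ∀ w, Force V w φ

/-- Medvedev's logic of finite problems. -/
def ML (φ : Fml) : Prop := ∀ n, MedValid n φ

/-- The singleton world `{i}` of `M n`. -/
def single {n : ℕ} (i : Fin n) : Med n := ⟨{i}, Finset.singleton_nonempty i⟩

/-- Exponentiation on ℕ∞ (anything involving ∞ gives ∞). -/
def epow : ℕ∞ → ℕ∞ → ℕ∞
  | some a, some b => some (a ^ b)
  | _, _ => ⊤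

/-- Kreisel–Putnam rank. -/
def rank : Fml → ℕ∞
  | .imp _ .bot => 1
  | .or φ ψ => rank φ + rank ψ
  | .and φ ψ => rank φ * rank ψ
  | .imp φ ψ => epow (rank ψ) (rank φ)
  | _ => ⊤

/-- Disjunction of `α i` over a finite index set. -/
noncomputable def bigOrOn {n : ℕ} (α : Fin n → Fml) (I : Finset (Fin n)) : Fml :=
  disj (I.toList.map α)

/-- `α_I := ¬¬⋁_{i ∈ I} α_i`. -/
noncomputable def alphaF {n : ℕ} (α : Fin n → Fml) (I : Finset (Fin n)) : Fml :=
  Fml.neg (Fml.neg (bigOrOn α I))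

theorem Force.mono {W : Type} [Preorder W] {V : W → ℕ → Prop} (hV : MonoVal V) :
    ∀ (φ : Fml) {w w' : W}, w ≤ w' → Force V w φ → Force V w' φ
  | .atom p, _, _, h, hw => hV h p hw
  | .bot, _, _, _, hw => hw
  | .and φ ψ, _, _, h, hw => ⟨Force.mono hV φ h hw.1, Force.mono hV ψ h hw.2⟩
  | .or φ ψ, _, _, h, hw => hw.imp (Force.mono hV φ h) (Force.mono hV ψ h)
  | .imp _ _, _, _, h, hw => fun u hu => hw u (le_trans h hu)

theorem force_neg_iff {W : Type} [Preorder W] (V : W → ℕ → Prop) (w : W) (φ : Fml) :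
    Force V w φ.neg ↔ ∀ u, w ≤ u → ¬Force V u φ := by
  simp [Fml.neg, Force]

namespace Med

variable {n : ℕ}

theorem le_single_iff {w : Med n} {i : Fin n} : w ≤ single i ↔ i ∈ w.1 :=
  Finset.singleton_subset_iff

instance : SemilatticeInf (Med n) where
  inf v w := ⟨v.1 ∪ w.1, v.2.mono Finset.subset_union_left⟩
  inf_le_left _ _ := Finset.subset_union_left
  inf_le_right _ _ := Finset.subset_union_right
  le_inf _ _ _ h h' := Finset.union_subset h h'

theorem mem_inf_iff {v w : Med n} {i : Fin n} : i ∈ (v ⊓ w).1 ↔ i ∈ v.1 ∨ i ∈ w.1 :=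
  Finset.mem_union

theorem force_neg_iff_single {V : Med n → ℕ → Prop} (hV : MonoVal V) (w : Med n) (φ : Fml) :
    Force V w φ.neg ↔ ∀ i ∈ w.1, ¬Force V (single i) φ := by
  rw [force_neg_iff]
  constructor
  · exact fun h i hi => h (single i) (le_single_iff.mpr hi)
  · rintro h u hwu hu
    obtain ⟨i, hi⟩ := u.2
    exact h i (hwu hi) (Force.mono hV φ (le_single_iff.mpr hi) hu)

theorem force_neg_inf {V : Med n → ℕ → Prop} (hV : MonoVal V) {v w : Med n} {φ : Fml}
    (hv : Force V v φ.neg) (hw : Force V w φ.neg) : Force V (v ⊓ w) φ.neg := by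
  rw [force_neg_iff_single hV] at hv hw ⊢
  intro i hi
  exact (mem_inf_iff.mp hi).elim (hv i) (hw i)

end Med

theorem medValid_of_wKPAx {n : ℕ} {φ : Fml} (hφ : wKPAx φ) : MedValid n φ := by
  obtain ⟨a, b, c, rfl⟩ := hφ
  intro V hV w v _ hv
  by_contra hcon
  simp only [Force, not_or, not_forall, exists_prop] at hcon
  obtain ⟨⟨v₁, hvv₁, ha₁, hb₁⟩, ⟨v₂, hvv₂, ha₂, hc₂⟩⟩ := hcon
  have hbc := hv (v₁ ⊓ v₂) (le_inf hvv₁ hvv₂) (Med.force_neg_inf hV ha₁ ha₂)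
  rcases hbc with hb | hc
  · exact hb₁ (Force.mono hV _ inf_le_left hb)
  · exact hc₂ (Force.mono hV _ inf_le_right hc)

/-- The weak Kreisel–Putnam axiom
`(¬p → (¬q ∨ ¬r)) → ((¬p → ¬q) ∨ (¬p → ¬r))` is valid in every Medvedev frame. -/
theorem stmt5 (n : ℕ) :
    MedValid n (.imp (.imp (Fml.atom 0).neg (.or (Fml.atom 1).neg (Fml.atom 2).neg))
      (.or (.imp (Fml.atom 0).neg (Fml.atom 1).neg)
        (.imp (Fml.atom 0).neg (Fml.atom 2).neg))) :=
  medValid_of_wKPAx ⟨.atom 0, .atom 1, .atom 2, rfl⟩
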